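/- arXiv:1408.0418 — 2 statements merged into one kernel-verified Lean document; each statement's English description precedes it below -/
import Mathlib

section
/- For i ≥ 0 let H_i ≤ ℤ² be the subgroup generated by (1,0) and (0, 2^i). Then: (a) a matrix M ∈ GL(2,ℤ) satisfies M(H_i) = H_i if and only if the lower-left entry of M is divisible by 2^i; (b) consequently, the setwise stabilizers Stab(H_i) = {M ∈ GL(2,ℤ) : M(H_i) = H_i} form a strictly decreasing infinite chain Stab(H_0) ⊋ Stab(H_1) ⊋ Stab(H_2) ⊋ ⋯. -/
namespace Stmt7

/-- `H i ≤ ℤ²` is the subgroup generated by `(1,0)` and `(0, 2^i)`. -/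
def H (i : ℕ) : AddSubgroup (Fin 2 → ℤ) :=
  AddSubgroup.closure {![1, 0], ![0, (2 : ℤ) ^ i]}

/-- The setwise stabilizer of `H i` in `GL(2, ℤ)`. -/
def Stab (i : ℕ) : Set (GL (Fin 2) ℤ) :=
  {M | (fun v => (M : Matrix (Fin 2) (Fin 2) ℤ).mulVec v) '' (H i : Set (Fin 2 → ℤ))
        = (H i : Set (Fin 2 → ℤ))}

lemma mem_H (i : ℕ) (v : Fin 2 → ℤ) : v ∈ H i ↔ (2:ℤ)^i ∣ v 1 := by
  constructor
  · intro hv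
    induction hv using AddSubgroup.closure_induction with
    | mem x hx =>
      rcases hx with h | h <;> subst h <;> simp
    | zero => simp
    | add x y _ _ hx hy => simpa using dvd_add hx hy
    | neg x _ hx => simpa using hx.neg_right
  · rintro ⟨k, hk⟩
    have hv : v = (v 0) • ![1, 0] + k • ![0, (2:ℤ)^i] := by
      funext j
      fin_cases j <;> simp [hk] <;> ring
    rw [hv]
    exact add_mem (zsmul_mem (AddSubgroup.subset_closure (by simp)) _)
      (zsmul_mem (AddSubgroup.subset_closure (by simp)) _)

lemma inv_entry_dvd (i : ℕ) (A B : Matrix (Fin 2) (Fin 2) ℤ) (h : B * A = 1)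
    (hd : (2:ℤ)^i ∣ B 1 0) : (2:ℤ)^i ∣ A 1 0 := by
  have h10 : B 1 0 * A 0 0 + B 1 1 * A 1 0 = 0 := by
    have := congrFun (congrFun h 1) 0
    simpa [Matrix.mul_apply, Fin.sum_univ_two] using this
  have h11 : B 1 0 * A 0 1 + B 1 1 * A 1 1 = 1 := by
    have := congrFun (congrFun h 1) 1
    simpa [Matrix.mul_apply, Fin.sum_univ_two] using this
  have key : A 1 0 = -(B 1 0 * (A 0 0 * A 1 1 - A 0 1 * A 1 0)) := by
    linear_combination (A 1 1) * h10 - (A 1 0) * h11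
  rw [key]
  exact (hd.mul_right _).neg_right

lemma stab_iff (i : ℕ) (M : GL (Fin 2) ℤ) :
    M ∈ Stab i ↔ (2 : ℤ) ^ i ∣ (M : Matrix (Fin 2) (Fin 2) ℤ) 1 0 := by
  set A : Matrix (Fin 2) (Fin 2) ℤ := (M : Matrix (Fin 2) (Fin 2) ℤ) with hA
  set B : Matrix (Fin 2) (Fin 2) ℤ := ((M⁻¹ : GL (Fin 2) ℤ) : Matrix (Fin 2) (Fin 2) ℤ) with hB
  have hAB : A * B = 1 := by
    simpa [hA, hB] using congrArg Units.val (mul_inv_cancel M)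
  have hBA : B * A = 1 := by
    simpa [hA, hB] using congrArg Units.val (inv_mul_cancel M)
  constructor
  · intro hM
    have h1 : A.mulVec ![1, 0] ∈ (H i : Set (Fin 2 → ℤ)) := by
      rw [← hM]
      exact ⟨![1, 0], (mem_H i _).2 (by simp), rfl⟩
    have := (mem_H i _).1 h1
    simpa [Matrix.mulVec, dotProduct, Fin.sum_univ_two] using this
  · intro hd
    have hdB : (2:ℤ)^i ∣ B 1 0 := inv_entry_dvd i B A hAB hd
    apply Set.eq_of_subset_of_subset
    · rintro w ⟨v, hv, rfl⟩
      rw [SetLike.mem_coe, mem_H] at hv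
      have h1 : (A.mulVec v) 1 = A 1 0 * v 0 + A 1 1 * v 1 := by
        simp [Matrix.mulVec, dotProduct, Fin.sum_univ_two]
      show A.mulVec v ∈ H i
      rw [mem_H, h1]
      exact dvd_add (hd.mul_right _) (hv.mul_left _)
    · intro w hw
      refine ⟨B.mulVec w, ?_, ?_⟩
      · rw [SetLike.mem_coe, mem_H] at hw ⊢
        have : (B.mulVec w) 1 = B 1 0 * w 0 + B 1 1 * w 1 := by
          simp [Matrix.mulVec, dotProduct, Fin.sum_univ_two]
        rw [this]
        exact dvd_add (hdB.mul_right _) (hw.mul_left _)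
      · show A.mulVec (B.mulVec w) = w
        rw [Matrix.mulVec_mulVec, hAB, Matrix.one_mulVec]

/-- (a) `M` stabilizes `H i` iff its lower-left entry is divisible by `2^i`;
(b) the stabilizers form a strictly decreasing infinite chain. -/
theorem stmt7 :
    (∀ (i : ℕ) (M : GL (Fin 2) ℤ),
        M ∈ Stab i ↔ (2 : ℤ) ^ i ∣ (M : Matrix (Fin 2) (Fin 2) ℤ) 1 0) ∧
    (∀ i : ℕ, Stab (i + 1) ⊂ Stab i) := by
  refine ⟨stab_iff, fun i => ⟨?_, ?_⟩⟩
  · intro M hM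
    rw [stab_iff] at hM ⊢
    exact (pow_dvd_pow 2 i.le_succ).trans hM
  · intro hsub
    set A : Matrix (Fin 2) (Fin 2) ℤ := !![1, 0; (2:ℤ)^i, 1] with hA
    set B : Matrix (Fin 2) (Fin 2) ℤ := !![1, 0; -(2:ℤ)^i, 1] with hB
    have hAB : A * B = 1 := by
      ext j k
      fin_cases j <;> fin_cases k <;>
        simp [hA, hB, Matrix.mul_apply, Fin.sum_univ_two]
    have hBA : B * A = 1 := by
      ext j k
      fin_cases j <;> fin_cases k <;>
        simp [hA, hB, Matrix.mul_apply, Fin.sum_univ_two]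
    let M : GL (Fin 2) ℤ := ⟨A, B, hAB, hBA⟩
    have hMA : (M : Matrix (Fin 2) (Fin 2) ℤ) = A := rfl
    have hA10 : A 1 0 = (2:ℤ)^i := by rw [hA]; simp
    have hMem : M ∈ Stab i := by
      rw [stab_iff, hMA, hA10]
    have hMem' : M ∈ Stab (i + 1) := hsub hMem
    rw [stab_iff, hMA, hA10] at hMem'
    have hle : (2:ℤ)^(i+1) ≤ (2:ℤ)^i := Int.le_of_dvd (by positivity) hMem'
    have hlt : (2:ℤ)^i < (2:ℤ)^(i+1) := by
      have : (1:ℤ) < 2 := by norm_num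
      exact pow_lt_pow_right₀ this i.lt_succ_self
    linarith

end Stmt7
end

section
/- Let G be a group such that every nontrivial element lies in a unique maximal abelian subgroup and every maximal abelian subgroup A is malnormal (gAg⁻¹ ∩ A = {1} for g ∉ A). Let H ≤ G be an abelian subgroup and α an automorphism of G. Suppose α(h) = h for some nontrivial h ∈ H, and for every x ∈ H the element α(x) is conjugate to x in G. Then α(x) = x for all x ∈ H. -/
namespace Stmt12

variable {G : Type*} [Group G]

/-- A subgroup is abelian if all its elements commute. -/
def IsAbelianSub (A : Subgroup G) : Prop := ∀ x ∈ A, ∀ y ∈ A, x * y = y * x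

/-- A maximal abelian subgroup: abelian, and not properly contained in an abelian
subgroup. -/
def IsMaxAbelian (A : Subgroup G) : Prop :=
  IsAbelianSub A ∧ ∀ B : Subgroup G, IsAbelianSub B → A ≤ B → B = A

/-- A subgroup `A` is malnormal if `gAg⁻¹ ∩ A = {1}` for all `g ∉ A`. -/
def IsMalnormal (A : Subgroup G) : Prop :=
  ∀ g ∉ A, ∀ x ∈ A, g * x * g⁻¹ ∈ A → x = 1

lemma map_maxAbelian (α : G ≃* G) {A : Subgroup G} (hA : IsMaxAbelian A) :
    IsMaxAbelian (A.map α.toMonoidHom) := by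
  constructor
  · rintro x hx y hy
    rcases hx with ⟨a, ha, rfl⟩
    rcases hy with ⟨b, hb, rfl⟩
    simp only [MulEquiv.coe_toMonoidHom]
    rw [← map_mul, ← map_mul, hA.1 a ha b hb]
  · intro B hB hle
    have hcom : IsAbelianSub (B.comap α.toMonoidHom) := by
      intro x hx y hy
      have := hB _ hx _ hy
      apply α.injective
      simpa [map_mul] using this
    have hAc : A ≤ B.comap α.toMonoidHom := by
      intro a ha
      exact hle ⟨a, ha, rfl⟩
    have := hA.2 _ hcom hAc
    calc B = (B.comap α.toMonoidHom).map α.toMonoidHom :=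
            (Subgroup.map_comap_eq_self_of_surjective α.surjective B).symm
      _ = A.map α.toMonoidHom := by rw [this]

/-- Suppose every nontrivial element of `G` lies in a unique maximal abelian subgroup
and maximal abelian subgroups are malnormal. If `H` is an abelian subgroup, `α` an
automorphism fixing some nontrivial `h ∈ H` and sending every element of `H` to a
conjugate of itself, then `α` is the identity on `H`. -/
theorem stmt12
    (h1 : ∀ g : G, g ≠ 1 → ∃! A : Subgroup G, IsMaxAbelian A ∧ g ∈ A)
    (h2 : ∀ A : Subgroup G, IsMaxAbelian A → IsMalnormal A)
    (H : Subgroup G) (hH : IsAbelianSub H)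
    (α : G ≃* G) (h : G) (hhH : h ∈ H) (hh1 : h ≠ 1) (hfix : α h = h)
    (hconj : ∀ x ∈ H, ∃ g : G, α x = g * x * g⁻¹) :
    ∀ x ∈ H, α x = x := by
  obtain ⟨A, ⟨hAmax, hhA⟩, hAuniq⟩ := h1 h hh1
  -- H ≤ A
  have hHA : ∀ x ∈ H, x ∈ A := by
    intro x hx
    by_contra hxA
    have hcomm : x * h * x⁻¹ = h := by
      rw [hH x hx h hhH]; group
    have := h2 A hAmax x hxA h hhA (by rw [hcomm]; exact hhA)
    exact hh1 this
  -- α(A) = A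
  have hmap : A.map α.toMonoidHom = A := by
    apply hAuniq
    exact ⟨map_maxAbelian α hAmax, ⟨h, hhA, hfix⟩⟩
  intro x hx
  by_cases hx1 : x = 1
  · simp [hx1]
  obtain ⟨g, hg⟩ := hconj x hx
  have hxA : x ∈ A := hHA x hx
  have hαxA : α x ∈ A := by
    rw [← hmap]; exact ⟨x, hxA, rfl⟩
  by_cases hgA : g ∈ A
  · rw [hg, hAmax.1 g hgA x hxA]; group
  · exact absurd (h2 A hAmax g hgA x hxA (hg ▸ hαxA)) hx1

end Stmt12
end
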